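/- Standard teleportation through a shared two-qubit state ρ with singlet fraction F = ⟨φ⁺|ρ|φ⁺⟩ implements a qubit channel whose entanglement fidelity equals F, and hence whose average fidelity equals (2F+1)/3. -/

import Mathlib

/-
Unfolding the Bell measurement and the Pauli corrections, the channel `Λ = teleChan ρ`
is linear, satisfies `tr Λ(σ) = tr σ · tr ρ`, and `∑ᵢⱼ Λ(|i⟩⟨j|)ᵢⱼ = 4 ⟨φ⁺|ρ|φ⁺⟩`; these are
finite computations and give the entanglement fidelity.

For the average fidelity, let `ψ = U|0⟩` with `U` Haar distributed. Its fourth moments are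
`E[ψᵢ ψ̄ⱼ ψₖ ψ̄ₗ] = (δᵢⱼ δₖₗ + δᵢₗ δₖⱼ) / 6`: invariance under the phase gate `diag(i, 1)` kills the
moments whose indices are unbalanced, invariance under `X` and the symmetry of the monomial reduce
the others to `a = E|ψ₀|⁴` and `b = E|ψ₀ ψ₁|²`, normalisation gives `2a + 2b = 1`, and invariance
under the Hadamard gate gives `a = (2a + 4b) / 4`. Hence for every linear `Λ` the average of
`⟨ψ|Λ(|ψ⟩⟨ψ|)|ψ⟩` is `(tr Λ(1) + ∑ᵢⱼ Λ(|i⟩⟨j|)ᵢⱼ) / 6`, which is `(2 + 4F) / 6` here.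
-/

open MeasureTheory Matrix
open scoped ComplexOrder

/-- The projector onto the two-qubit maximally entangled state `(|00⟩+|11⟩)/√2`. -/
noncomputable def phiPlus : Matrix (Fin 2 × Fin 2) (Fin 2 × Fin 2) ℂ :=
  Matrix.of fun p q => if p.1 = p.2 ∧ q.1 = q.2 then (1/2 : ℂ) else 0

/-- The Bell basis vector `|β_{ac}⟩ = (1/√2) Σᵢ (−1)^{a·i} |i⟩|i⊕c⟩`. -/
noncomputable def bellVec (a c : Fin 2) : Fin 2 × Fin 2 → ℂ :=
  fun p => if p.2 = p.1 + c then ((-1 : ℂ) ^ (a.val * p.1.val)) / Real.sqrt 2 else 0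

/-- The Pauli correction `Z^a X^c` applied by Bob upon outcome `(a,c)`. -/
def pauliCorr (a c : Fin 2) : Matrix (Fin 2) (Fin 2) ℂ :=
  Matrix.of fun k y => if y = k + c then (-1 : ℂ) ^ (a.val * k.val) else 0

/-- The standard teleportation channel through the shared two-qubit state `ρ`:
Alice Bell-measures the message together with her half of `ρ`, communicates the outcome
`(a,c)`, and Bob applies the Pauli correction `Z^a X^c`. -/
noncomputable def teleChan (ρ : Matrix (Fin 2 × Fin 2) (Fin 2 × Fin 2) ℂ)
    (σ : Matrix (Fin 2) (Fin 2) ℂ) : Matrix (Fin 2) (Fin 2) ℂ :=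
  ∑ a : Fin 2, ∑ c : Fin 2,
    pauliCorr a c *
      (Matrix.of fun y y' => ∑ m : Fin 2, ∑ x : Fin 2, ∑ m' : Fin 2, ∑ x' : Fin 2,
        (starRingEnd ℂ) (bellVec a c (m, x)) * bellVec a c (m', x') * σ m m' *
          ρ (x, y) (x', y')) *
    (pauliCorr a c)ᴴ

open ComplexConjugate

lemma conj_bellVec_mul_bellVec (a c : Fin 2) (p q : Fin 2 × Fin 2) :
    conj (bellVec a c p) * bellVec a c q =
      if p.2 = p.1 + c ∧ q.2 = q.1 + c then
        (-1) ^ (a.val * p.1.val) * (-1) ^ (a.val * q.1.val) / 2 else 0 := by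
  have h2 : (√2 : ℂ) * √2 = 2 := by norm_cast; exact Real.mul_self_sqrt zero_le_two
  unfold bellVec
  split_ifs
  · simp [map_div₀, div_mul_div_comm, h2]
  all_goals simp_all

noncomputable def teleChanLinearMap (ρ : Matrix (Fin 2 × Fin 2) (Fin 2 × Fin 2) ℂ) :
    Matrix (Fin 2) (Fin 2) ℂ →ₗ[ℂ] Matrix (Fin 2) (Fin 2) ℂ where
  toFun := teleChan ρ
  map_add' σ τ := by
    ext y y'
    simp only [teleChan, Matrix.sum_apply, Matrix.add_apply, Matrix.mul_apply, Matrix.of_apply,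
      mul_add, add_mul, Finset.sum_add_distrib]
  map_smul' s σ := by
    ext y y'
    simp only [teleChan, Matrix.sum_apply, Matrix.smul_apply, Matrix.mul_apply, Matrix.of_apply,
      smul_eq_mul, Finset.mul_sum, Finset.sum_mul, RingHom.id_apply]
    simp only [mul_assoc, mul_left_comm s]

theorem trace_teleChan (ρ : Matrix (Fin 2 × Fin 2) (Fin 2 × Fin 2) ℂ)
    (σ : Matrix (Fin 2) (Fin 2) ℂ) : (teleChan ρ σ).trace = σ.trace * ρ.trace := by
  simp [teleChan, trace, Matrix.mul_apply, Fin.sum_univ_two, conjTranspose_apply,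
    conj_bellVec_mul_bellVec, pauliCorr, Fintype.sum_prod_type]
  ring

theorem sum_teleChan_single_apply (ρ : Matrix (Fin 2 × Fin 2) (Fin 2 × Fin 2) ℂ) :
    ∑ i, ∑ j, teleChan ρ (single i j 1) i j = 4 * (ρ * phiPlus).trace := by
  simp [teleChan, trace, Matrix.mul_apply, Fin.sum_univ_two, conjTranspose_apply,
    conj_bellVec_mul_bellVec, pauliCorr, phiPlus, Matrix.single, Fintype.sum_prod_type]
  ring

section HaarMoments

noncomputable def firstCol (U : unitaryGroup (Fin 2) ℂ) (i : Fin 2) : ℂ :=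
  (U : Matrix (Fin 2) (Fin 2) ℂ) i 0

noncomputable def colMonomial (i j k l : Fin 2) (U : unitaryGroup (Fin 2) ℂ) : ℂ :=
  firstCol U i * conj (firstCol U j) * (firstCol U k * conj (firstCol U l))

lemma firstCol_mul (g U : unitaryGroup (Fin 2) ℂ) (i : Fin 2) :
    firstCol (g * U) i = ∑ m, (g : Matrix (Fin 2) (Fin 2) ℂ) i m * firstCol U m := by
  simp [firstCol, Matrix.mul_apply]

lemma sum_firstCol_mul_conj (U : unitaryGroup (Fin 2) ℂ) :
    ∑ i, firstCol U i * conj (firstCol U i) = 1 := by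
  have h := congrFun (congrFun (mem_unitaryGroup_iff'.mp U.2) 0) 0
  simpa [Matrix.mul_apply, mul_comm, firstCol] using h

lemma norm_colMonomial_le (i j k l : Fin 2) (U : unitaryGroup (Fin 2) ℂ) :
    ‖colMonomial i j k l U‖ ≤ 1 := by
  have h (m : Fin 2) : ‖firstCol U m‖ ≤ 1 := entry_norm_bound_of_unitary U.2 m 0
  simp only [colMonomial, norm_mul, RCLike.norm_conj]
  exact mul_le_one₀ (mul_le_one₀ (h i) (norm_nonneg _) (h j)) (by positivity)
    (mul_le_one₀ (h k) (norm_nonneg _) (h l))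

lemma continuous_firstCol (i : Fin 2) : Continuous fun U => firstCol U i :=
  (continuous_apply 0).comp ((continuous_apply i).comp continuous_subtype_val)

lemma continuous_colMonomial (i j k l : Fin 2) : Continuous (colMonomial i j k l) := by
  have := continuous_firstCol
  unfold colMonomial
  fun_prop

noncomputable def phaseGate : unitaryGroup (Fin 2) ℂ :=
  ⟨diagonal ![Complex.I, 1], by
    rw [mem_unitaryGroup_iff]
    ext i j
    fin_cases i <;> fin_cases j <;> simp⟩

noncomputable def pauliXGate : unitaryGroup (Fin 2) ℂ :=
  ⟨!![0, 1; 1, 0], by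
    rw [mem_unitaryGroup_iff]
    ext i j
    fin_cases i <;> fin_cases j <;> simp [Matrix.mul_apply, Matrix.star_apply]⟩

noncomputable def hadamardGate : unitaryGroup (Fin 2) ℂ :=
  ⟨((√2 : ℝ) : ℂ)⁻¹ • !![1, 1; 1, -1], by
    have h2 : (√2 : ℂ) * √2 = 2 := by norm_cast; exact Real.mul_self_sqrt zero_le_two
    rw [mem_unitaryGroup_iff]
    ext i j
    fin_cases i <;> fin_cases j <;>
      simp [Matrix.mul_apply, Matrix.star_apply, ← mul_inv, h2, Complex.conj_ofReal] <;> norm_num⟩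

noncomputable def colProj (U : unitaryGroup (Fin 2) ℂ) : Matrix (Fin 2) (Fin 2) ℂ :=
  Matrix.of fun i j => firstCol U i * conj (firstCol U j)

lemma trace_colProj_mul_map (Λ : Matrix (Fin 2) (Fin 2) ℂ →ₗ[ℂ] Matrix (Fin 2) (Fin 2) ℂ)
    (U : unitaryGroup (Fin 2) ℂ) :
    (colProj U * Λ (colProj U)).trace =
      ∑ i, ∑ j, ∑ k, ∑ l, Λ (single k l 1) j i * colMonomial i j k l U := by
  have hΛ : Λ (colProj U) = ∑ k, ∑ l, colProj U k l • Λ (single k l 1) := by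
    conv_lhs => rw [matrix_eq_sum_single (colProj U)]
    simp only [map_sum, ← map_smul, smul_single, smul_eq_mul, mul_one]
  rw [hΛ]
  simp only [trace, diag_apply, mul_apply, Matrix.add_apply, Matrix.smul_apply, smul_eq_mul,
    Fin.sum_univ_two, colProj, colMonomial, of_apply]
  ring

variable [MeasurableSpace (unitaryGroup (Fin 2) ℂ)] (μ : Measure (unitaryGroup (Fin 2) ℂ))

noncomputable def colMoment (i j k l : Fin 2) : ℂ :=
  ∫ U, colMonomial i j k l U ∂μ

lemma colMoment_swap (i j k l : Fin 2) : colMoment μ i j k l = colMoment μ k j i l := by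
  unfold colMoment colMonomial
  congr 1 with U
  ring

variable [BorelSpace (unitaryGroup (Fin 2) ℂ)]

lemma integrable_colMonomial [IsFiniteMeasure μ] (i j k l : Fin 2) :
    Integrable (colMonomial i j k l) μ :=
  .of_bound (continuous_colMonomial i j k l).aestronglyMeasurable 1
    (ae_of_all _ (norm_colMonomial_le i j k l))

lemma integral_sum_mul_colMonomial [IsFiniteMeasure μ] (c : Fin 2 → Fin 2 → Fin 2 → Fin 2 → ℂ) :
    ∫ U, ∑ i, ∑ j, ∑ k, ∑ l, c i j k l * colMonomial i j k l U ∂μ =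
      ∑ i, ∑ j, ∑ k, ∑ l, c i j k l * colMoment μ i j k l := by
  have hint (i j k l : Fin 2) : Integrable (fun U => c i j k l * colMonomial i j k l U) μ :=
    (integrable_colMonomial μ i j k l).const_mul _
  simp only [← Fintype.sum_prod_type']
  rw [integral_finsetSum _ fun p _ => hint p.1 p.2.1 p.2.2.1 p.2.2.2]
  simp only [integral_const_mul, colMoment]

lemma sum_colMoment_diag [IsProbabilityMeasure μ] : ∑ i, ∑ k, colMoment μ i i k k = 1 := by
  have h (U : unitaryGroup (Fin 2) ℂ) : ∑ i, ∑ k, colMonomial i i k k U = 1 := by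
    simp only [colMonomial, ← Finset.mul_sum, ← Finset.sum_mul, sum_firstCol_mul_conj, one_mul]
  simp only [colMoment, ← Fintype.sum_prod_type']
  rw [← integral_finsetSum _ fun p _ => integrable_colMonomial μ p.1 p.1 p.2 p.2]
  simp only [Fintype.sum_prod_type, h, integral_const, probReal_univ, one_smul]

lemma integrable_trace_colProj_mul [IsFiniteMeasure μ]
    (Λ : Matrix (Fin 2) (Fin 2) ℂ →ₗ[ℂ] Matrix (Fin 2) (Fin 2) ℂ) :
    Integrable (fun U => (colProj U * Λ (colProj U)).trace) μ := by
  simp only [trace_colProj_mul_map]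
  exact integrable_finsetSum _ fun i _ => integrable_finsetSum _ fun j _ =>
    integrable_finsetSum _ fun k _ => integrable_finsetSum _ fun l _ =>
      (integrable_colMonomial μ i j k l).const_mul _

variable [μ.IsMulLeftInvariant]

lemma colMoment_eq_integral_mul_left (g : unitaryGroup (Fin 2) ℂ) (i j k l : Fin 2) :
    colMoment μ i j k l = ∫ U, colMonomial i j k l (g * U) ∂μ :=
  (integral_mul_left_eq_self _ g).symm

lemma colMoment_eq_zero_of_phase {i j k l : Fin 2}
    (h : ![Complex.I, 1] i * conj (![Complex.I, 1] j) *
      (![Complex.I, 1] k * conj (![Complex.I, 1] l)) ≠ 1) :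
    colMoment μ i j k l = 0 := by
  have hg (U : unitaryGroup (Fin 2) ℂ) : colMonomial i j k l (phaseGate * U) =
      ![Complex.I, 1] i * conj (![Complex.I, 1] j) *
        (![Complex.I, 1] k * conj (![Complex.I, 1] l)) * colMonomial i j k l U := by
    simp only [colMonomial, firstCol_mul, phaseGate, diagonal_apply, ite_mul, zero_mul,
      Finset.sum_ite_eq, Finset.mem_univ, if_true, map_mul]
    ring
  have hfix := colMoment_eq_integral_mul_left μ phaseGate i j k l
  simp only [hg, integral_const_mul] at hfix
  by_contra hne
  exact h ((mul_eq_right₀ hne).mp hfix.symm)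

lemma colMoment_add_one (i j k l : Fin 2) :
    colMoment μ (i + 1) (j + 1) (k + 1) (l + 1) = colMoment μ i j k l := by
  have hg (U : unitaryGroup (Fin 2) ℂ) :
      colMonomial i j k l (pauliXGate * U) = colMonomial (i + 1) (j + 1) (k + 1) (l + 1) U := by
    have hX (m : Fin 2) : firstCol (pauliXGate * U) m = firstCol U (m + 1) := by
      fin_cases m <;> simp [firstCol_mul, pauliXGate]
    simp only [colMonomial, hX]
  rw [colMoment_eq_integral_mul_left μ pauliXGate i j k l]
  simp only [hg, colMoment]

lemma colMoment_hadamard [IsFiniteMeasure μ] :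
    colMoment μ 0 0 0 0 = ∑ i, ∑ j, ∑ k, ∑ l, 1 / 4 * colMoment μ i j k l := by
  have hg (U : unitaryGroup (Fin 2) ℂ) : colMonomial 0 0 0 0 (hadamardGate * U) =
      ∑ i, ∑ j, ∑ k, ∑ l, 1 / 4 * colMonomial i j k l U := by
    have h4 : ((√2 : ℝ) : ℂ)⁻¹ * ((√2 : ℝ) : ℂ)⁻¹ * (((√2 : ℝ) : ℂ)⁻¹ * ((√2 : ℝ) : ℂ)⁻¹) =
        1 / 4 := by
      rw [← mul_inv, ← mul_inv]
      norm_cast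
      rw [Real.mul_self_sqrt zero_le_two]
      norm_num
    have hH : firstCol (hadamardGate * U) 0 =
        ((√2 : ℝ) : ℂ)⁻¹ * (firstCol U 0 + firstCol U 1) := by
      simp [firstCol_mul, hadamardGate, mul_add]
    simp only [colMonomial, hH, map_mul, map_add, map_inv₀, Complex.conj_ofReal, Fin.sum_univ_two]
    set ψ := firstCol U
    linear_combination (ψ 0 + ψ 1) * (conj (ψ 0) + conj (ψ 1)) *
      ((ψ 0 + ψ 1) * (conj (ψ 0) + conj (ψ 1))) * h4
  rw [colMoment_eq_integral_mul_left μ hadamardGate 0 0 0 0]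
  simp only [hg, integral_sum_mul_colMonomial]

theorem colMoment_eq [IsProbabilityMeasure μ] (i j k l : Fin 2) :
    colMoment μ i j k l =
      ((if i = j ∧ k = l then 1 else 0) + (if i = l ∧ k = j then 1 else 0)) / 6 := by
  have h1111 : colMoment μ 1 1 1 1 = colMoment μ 0 0 0 0 := colMoment_add_one μ 0 0 0 0
  have h1100 : colMoment μ 1 1 0 0 = colMoment μ 0 0 1 1 := colMoment_add_one μ 0 0 1 1
  have h0110 : colMoment μ 0 1 1 0 = colMoment μ 0 0 1 1 := by
    rw [colMoment_swap, h1100]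
  have h1001 : colMoment μ 1 0 0 1 = colMoment μ 0 0 1 1 := colMoment_swap μ 1 0 0 1
  have hH := colMoment_hadamard μ
  have hnorm := sum_colMoment_diag μ
  simp (disch := norm_num [Complex.ext_iff]) only [Fin.sum_univ_two, colMoment_eq_zero_of_phase μ,
    h1111, h1100, h0110, h1001] at hH hnorm
  have hb : colMoment μ 0 0 1 1 = 1 / 6 := by linear_combination hnorm / 6 - 2 * hH / 3
  have ha : colMoment μ 0 0 0 0 = 1 / 3 := by linear_combination hnorm / 2 - hb
  revert i j k l
  simp only [Fin.forall_fin_two]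
  simp (disch := norm_num [Complex.ext_iff]) only [colMoment_eq_zero_of_phase μ, ha, hb, h1111,
    h1100, h0110, h1001]
  norm_num

theorem integral_trace_colProj_mul [IsProbabilityMeasure μ]
    (Λ : Matrix (Fin 2) (Fin 2) ℂ →ₗ[ℂ] Matrix (Fin 2) (Fin 2) ℂ) :
    ∫ U, (colProj U * Λ (colProj U)).trace ∂μ =
      ((Λ 1).trace + ∑ i, ∑ j, Λ (single i j 1) i j) / 6 := by
  have h1 : (1 : Matrix (Fin 2) (Fin 2) ℂ) = single 0 0 1 + single 1 1 1 := by
    ext i j; fin_cases i <;> fin_cases j <;> simp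
  simp only [trace_colProj_mul_map, integral_sum_mul_colMonomial, colMoment_eq]
  rw [h1, map_add]
  simp only [trace, diag_apply, Matrix.add_apply, Fin.sum_univ_two]
  norm_num
  ring

end HaarMoments

theorem stmt_12_general (ρ : Matrix (Fin 2 × Fin 2) (Fin 2 × Fin 2) ℂ)
    (htr : ρ.trace = 1)
    [MeasurableSpace (Matrix.unitaryGroup (Fin 2) ℂ)]
    [BorelSpace (Matrix.unitaryGroup (Fin 2) ℂ)]
    (μ : Measure (Matrix.unitaryGroup (Fin 2) ℂ)) [μ.IsHaarMeasure]
    [IsProbabilityMeasure μ] :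
    ((1/4 : ℂ) * ∑ i : Fin 2, ∑ j : Fin 2,
        teleChan ρ (Matrix.single i j 1) i j) = (ρ * phiPlus).trace ∧
    (∫ U : Matrix.unitaryGroup (Fin 2) ℂ,
        (Matrix.trace
          ((Matrix.of fun i j => (U : Matrix (Fin 2) (Fin 2) ℂ) i 0 *
              (starRingEnd ℂ) ((U : Matrix (Fin 2) (Fin 2) ℂ) j 0)) *
            teleChan ρ (Matrix.of fun i j => (U : Matrix (Fin 2) (Fin 2) ℂ) i 0 *
              (starRingEnd ℂ) ((U : Matrix (Fin 2) (Fin 2) ℂ) j 0)))).re ∂μ)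
      = (2 * ((ρ * phiPlus).trace).re + 1) / 3 := by
  have hF := sum_teleChan_single_apply ρ
  refine ⟨by rw [hF]; ring, ?_⟩
  change ∫ U, ((colProj U * teleChanLinearMap ρ (colProj U)).trace).re ∂μ = _
  have hre := integral_re (integrable_trace_colProj_mul μ (teleChanLinearMap ρ))
  simp only [RCLike.re_to_complex] at hre
  rw [hre, integral_trace_colProj_mul]
  simp only [teleChanLinearMap, LinearMap.coe_mk, AddHom.coe_mk, trace_teleChan, trace_one, htr, hF]
  norm_num [Complex.div_ofNat_re]
  ring

/-- **Teleportation fidelity equals the singlet fraction.**  Standard teleportation through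
a shared two-qubit state `ρ` with singlet fraction `F = ⟨φ⁺|ρ|φ⁺⟩` implements a qubit
channel whose entanglement fidelity `(1/4)Σᵢⱼ ⟨i|Λ(|i⟩⟨j|)|j⟩` equals `F`, and hence whose
Haar-average fidelity equals `(2F+1)/3`. -/
theorem stmt_12 (ρ : Matrix (Fin 2 × Fin 2) (Fin 2 × Fin 2) ℂ)
    (hρ : ρ.PosSemidef) (htr : ρ.trace = 1)
    [MeasurableSpace (Matrix.unitaryGroup (Fin 2) ℂ)]
    [BorelSpace (Matrix.unitaryGroup (Fin 2) ℂ)]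
    (μ : Measure (Matrix.unitaryGroup (Fin 2) ℂ)) [μ.IsHaarMeasure]
    [IsProbabilityMeasure μ] :
    ((1/4 : ℂ) * ∑ i : Fin 2, ∑ j : Fin 2,
        teleChan ρ (Matrix.single i j 1) i j) = (ρ * phiPlus).trace ∧
    (∫ U : Matrix.unitaryGroup (Fin 2) ℂ,
        (Matrix.trace
          ((Matrix.of fun i j => (U : Matrix (Fin 2) (Fin 2) ℂ) i 0 *
              (starRingEnd ℂ) ((U : Matrix (Fin 2) (Fin 2) ℂ) j 0)) *
            teleChan ρ (Matrix.of fun i j => (U : Matrix (Fin 2) (Fin 2) ℂ) i 0 *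
              (starRingEnd ℂ) ((U : Matrix (Fin 2) (Fin 2) ℂ) j 0)))).re ∂μ)
      = (2 * ((ρ * phiPlus).trace).re + 1) / 3 :=
  stmt_12_general ρ htr μ
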